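/- arXiv:solv-int/9902011 — 2 statements merged into one kernel-verified Lean document; each statement's English description precedes it below -/
import Mathlib

section
/- With the fixed-s orthogonal family setup, for every n ≥ 2 one has (1/s)·b_{n−1} = −C_n·(B_{n−1} − C_{n−1}) − h_n/h_{n−1}, where b_{n−1} is the coefficient of z^{n−1} in p_n. -/
/-! The operator `D = z (d/dz + s)` is symmetric for the pairing
`⟨f, g⟩ = ∮_{|z|=1} f(z) g(1/z) e^{s(z+1/z)} dz/z`: `⟨D f, g⟩ - ⟨f, D g⟩` is the
integral over the circle of the derivative of `f(z) g(1/z) e^{s(z+1/z)}`.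
Take `f = p_n`, `g = p_{n-1}`.
Orthogonality gives `⟨z p_n', p_{n-1}⟩ = -b_{n-1} h_{n-1}` (since `z p_n' - n p_n` has degree
`n - 1` and leading coefficient `-b_{n-1}`), `⟨p_n, z p_{n-1}'⟩ = 0` and
`⟨p_n, z p_{n-1}⟩ = h_n`, and the three-term recurrence, used twice, gives
`⟨z p_n, p_{n-1}⟩ = -C_n (B_{n-1} - C_{n-1}) h_{n-1}`.
-/

open Polynomial Metric

namespace Polynomial

variable {R : Type*} [CommRing R]

theorem coeff_X_mul_derivative (f : R[X]) (n : ℕ) :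
    (X * derivative f).coeff n = n * f.coeff n := by
  cases n with
  | zero => simp
  | succ n => rw [coeff_X_mul, coeff_derivative, mul_comm]; push_cast; rfl

theorem degree_X_mul_derivative_le (f : R[X]) : (X * derivative f).degree ≤ f.degree := by
  refine (degree_le_iff_coeff_zero _ _).2 fun m hm => ?_
  rw [coeff_X_mul_derivative, coeff_eq_zero_of_degree_lt hm, mul_zero]

theorem degree_X_mul_derivative_sub_C_mul_lt (f : R[X]) :
    (X * derivative f - C (f.natDegree : R) * f).degree < (f.natDegree : WithBot ℕ) := by
  refine (degree_lt_iff_coeff_zero _ _).2 fun m hm => ?_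
  rw [coeff_sub, coeff_X_mul_derivative, coeff_C_mul]
  rcases hm.eq_or_lt with rfl | hm
  · rw [sub_self]
  · rw [coeff_eq_zero_of_natDegree_lt hm, mul_zero, mul_zero, sub_zero]

theorem degree_sub_C_coeff_mul_lt {f q : R[X]} (hf : f.Monic) (hq : q.degree ≤ f.natDegree) :
    (q - C (q.coeff f.natDegree) * f).degree < (f.natDegree : WithBot ℕ) := by
  refine (degree_lt_iff_coeff_zero _ _).2 fun m hm => ?_
  rw [coeff_sub, coeff_C_mul]
  rcases hm.eq_or_lt with rfl | hm
  · rw [hf.coeff_natDegree, mul_one, sub_self]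
  · rw [coeff_eq_zero_of_natDegree_lt hm,
      coeff_eq_zero_of_degree_lt (hq.trans_lt (by exact_mod_cast hm)), mul_zero, sub_zero]

end Polynomial

namespace LinearMap.BilinForm

variable {R : Type*} [CommRing R]

theorem apply_X_mul_of_recurrence (B : LinearMap.BilinForm R R[X]) {p : ℕ → R[X]}
    {Bn Cn : ℕ → R}
    (hrec : ∀ n, 1 ≤ n → X * (p n + C (Cn n) * p (n - 1)) = p (n + 1) + C (Bn n) * p n)
    {n : ℕ} (hn : 1 ≤ n) (q : R[X]) :
    B (X * p n) q + Cn n * B (X * p (n - 1)) q = B (p (n + 1)) q + Bn n * B (p n) q := by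
  simpa only [mul_add, ← smul_eq_C_mul, mul_smul_comm, map_add, map_smul, LinearMap.add_apply,
    smul_apply, smul_eq_mul] using congrArg (B · q) (hrec n hn)

structure IsMonicOrthogonalFamily (B : LinearMap.BilinForm R R[X]) (p : ℕ → R[X]) : Prop where
  monic : ∀ n, (p n).Monic
  natDegree_eq : ∀ n, (p n).natDegree = n
  orthogonal : ∀ n m, n ≠ m → B (p n) (p m) = 0

namespace IsMonicOrthogonalFamily

variable {B : LinearMap.BilinForm R R[X]} {p : ℕ → R[X]}

theorem flip (hp : B.IsMonicOrthogonalFamily p) : B.flip.IsMonicOrthogonalFamily p :=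
  ⟨hp.monic, hp.natDegree_eq, fun n m hnm => hp.orthogonal m n hnm.symm⟩

theorem coeff_self (hp : B.IsMonicOrthogonalFamily p) (n : ℕ) : (p n).coeff n = 1 := by
  simpa only [hp.natDegree_eq] using (hp.monic n).coeff_natDegree

theorem sub_C_coeff_mul_degree_lt (hp : B.IsMonicOrthogonalFamily p) {q : R[X]} {k : ℕ}
    (hq : q.degree ≤ k) :
    (q - C (q.coeff k) * p k).degree < k := by
  simpa only [hp.natDegree_eq] using
    degree_sub_C_coeff_mul_lt (hp.monic k) (q := q) (by rwa [hp.natDegree_eq])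

theorem apply_eq_zero_of_degree_lt (hp : B.IsMonicOrthogonalFamily p) {q : R[X]} {k : ℕ}
    (hq : q.degree < k) : B q (p k) = 0 := by
  suffices ∀ d ≤ k, ∀ q : R[X], q.degree < d → B q (p k) = 0 from this k le_rfl q hq
  intro d
  induction d with
  | zero =>
    intro _ q hq
    rw [show q = 0 by simpa using hq, map_zero, LinearMap.zero_apply]
  | succ d ih =>
    intro hd q hq
    have hq : q.degree ≤ d := Order.le_of_lt_succ (by exact_mod_cast hq)
    rw [← sub_add_cancel q (C (q.coeff d) * p d), map_add, LinearMap.add_apply,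
      ih (by omega) _ (hp.sub_C_coeff_mul_degree_lt hq), ← smul_eq_C_mul, map_smul, smul_apply,
      hp.orthogonal d k (by omega), smul_zero, zero_add]

theorem apply_eq_coeff_mul_of_degree_le (hp : B.IsMonicOrthogonalFamily p) {q : R[X]} {k : ℕ}
    (hq : q.degree ≤ k) : B q (p k) = q.coeff k * B (p k) (p k) := by
  nth_rw 1 [← sub_add_cancel q (C (q.coeff k) * p k)]
  rw [map_add, LinearMap.add_apply,
    hp.apply_eq_zero_of_degree_lt (hp.sub_C_coeff_mul_degree_lt hq), ← smul_eq_C_mul, map_smul,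
    smul_apply, smul_eq_mul, zero_add]

theorem X_mul_apply_succ (hp : B.IsMonicOrthogonalFamily p) (i : ℕ) :
    B (X * p i) (p (i + 1)) = B (p (i + 1)) (p (i + 1)) := by
  have hdeg : (X * p i).degree ≤ ((i + 1 : ℕ) : WithBot ℕ) := degree_le_of_natDegree_le <|
    natDegree_mul_le.trans (by rw [hp.natDegree_eq, add_comm]; gcongr; exact natDegree_X_le)
  rw [hp.apply_eq_coeff_mul_of_degree_le hdeg, coeff_X_mul, hp.coeff_self, one_mul]

theorem X_mul_derivative_succ_apply (hp : B.IsMonicOrthogonalFamily p) (k : ℕ) :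
    B (X * derivative (p (k + 1))) (p k) = -(p (k + 1)).coeff k * B (p k) (p k) := by
  set r := X * derivative (p (k + 1)) - C ((k + 1 : ℕ) : R) * p (k + 1) with hr_def
  have hr : r.degree ≤ (k : WithBot ℕ) := by
    have := degree_X_mul_derivative_sub_C_mul_lt (p (k + 1))
    rw [hp.natDegree_eq] at this
    exact Order.le_of_lt_succ (by exact_mod_cast this)
  rw [← sub_add_cancel (X * derivative (p (k + 1))) (C ((k + 1 : ℕ) : R) * p (k + 1)),
    ← hr_def, map_add, LinearMap.add_apply, hp.apply_eq_coeff_mul_of_degree_le hr,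
    ← smul_eq_C_mul, map_smul, smul_apply, hp.orthogonal (k + 1) k (by omega), smul_zero,
    add_zero, hr_def, coeff_sub, coeff_X_mul_derivative, coeff_C_mul]
  push_cast
  ring

variable {Bn Cn : ℕ → R}

theorem X_mul_apply_self (hp : B.IsMonicOrthogonalFamily p)
    (hrec : ∀ n, 1 ≤ n → X * (p n + C (Cn n) * p (n - 1)) = p (n + 1) + C (Bn n) * p n)
    {n : ℕ} (hn : 1 ≤ n) : B (X * p n) (p n) = (Bn n - Cn n) * B (p n) (p n) := by
  obtain ⟨i, rfl⟩ : ∃ i, n = i + 1 := ⟨n - 1, by omega⟩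
  have h := apply_X_mul_of_recurrence B hrec hn (p (i + 1))
  rw [Nat.add_sub_cancel, hp.X_mul_apply_succ, hp.orthogonal (i + 2) (i + 1) (by omega)] at h
  linear_combination h

theorem X_mul_succ_apply (hp : B.IsMonicOrthogonalFamily p)
    (hrec : ∀ n, 1 ≤ n → X * (p n + C (Cn n) * p (n - 1)) = p (n + 1) + C (Bn n) * p n)
    {n : ℕ} (hn : 1 ≤ n) :
    B (X * p (n + 1)) (p n) = -Cn (n + 1) * ((Bn n - Cn n) * B (p n) (p n)) := by
  have h := apply_X_mul_of_recurrence B hrec (Nat.le_add_left 1 n) (p n)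
  rw [Nat.add_sub_cancel, hp.X_mul_apply_self hrec hn, hp.orthogonal (n + 2) n (by omega),
    hp.orthogonal (n + 1) n (by omega)] at h
  linear_combination h

end IsMonicOrthogonalFamily

end LinearMap.BilinForm

namespace Polynomial

theorem continuousOn_circlePairing_integrand (s : ℂ) (f g : ℂ[X]) :
    ContinuousOn (fun z : ℂ => f.eval z * g.eval z⁻¹ * Complex.exp (s * (z + z⁻¹)) / z)
      (sphere 0 1) := fun z hz =>
  have hz0 : z ≠ 0 := ne_zero_of_mem_unit_sphere ⟨z, hz⟩
  (by fun_prop (disch := exact hz0) : ContinuousAt _ z).continuousWithinAt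

theorem circleIntegrable_circlePairing_integrand (s : ℂ) (f g : ℂ[X]) :
    CircleIntegrable
      (fun z : ℂ => f.eval z * g.eval z⁻¹ * Complex.exp (s * (z + z⁻¹)) / z) 0 1 :=
  (continuousOn_circlePairing_integrand s f g).circleIntegrable zero_le_one

noncomputable def circlePairing (s : ℂ) : LinearMap.BilinForm ℂ ℂ[X] :=
  LinearMap.mk₂ ℂ
    (fun f g => ∮ z in C(0, 1), f.eval z * g.eval z⁻¹ * Complex.exp (s * (z + z⁻¹)) / z)
    (fun f f' g => by
      simp only [eval_add, add_mul, add_div]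
      exact circleIntegral.integral_add (circleIntegrable_circlePairing_integrand s f g)
        (circleIntegrable_circlePairing_integrand s f' g))
    (fun c f g => by
      simp only [eval_smul, smul_eq_mul, mul_assoc, mul_div_assoc]
      exact circleIntegral.integral_const_mul c _ 0 1)
    (fun f g g' => by
      rw [← circleIntegral.integral_add (circleIntegrable_circlePairing_integrand s f g)
        (circleIntegrable_circlePairing_integrand s f g')]
      congr 1; ext z; rw [eval_add]; ring)
    (fun c f g => by
      simp only [eval_smul, smul_eq_mul]
      rw [← circleIntegral.integral_const_mul]
      congr 1; ext z; ring)

theorem circlePairing_apply (s : ℂ) (f g : ℂ[X]) :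
    circlePairing s f g =
      ∮ z in C(0, 1), f.eval z * g.eval z⁻¹ * Complex.exp (s * (z + z⁻¹)) / z :=
  rfl

theorem circlePairing_X_mul_derivative_add_C_mul (s : ℂ) (f g : ℂ[X]) :
    circlePairing s (X * (derivative f + C s * f)) g =
      circlePairing s f (X * (derivative g + C s * g)) := by
  rw [← sub_eq_zero, circlePairing_apply, circlePairing_apply,
    ← circleIntegral.integral_sub (circleIntegrable_circlePairing_integrand s _ _)
      (circleIntegrable_circlePairing_integrand s _ _)]
  refine circleIntegral.integral_eq_zero_of_hasDerivWithinAt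
    (f := fun z => f.eval z * g.eval z⁻¹ * Complex.exp (s * (z + z⁻¹))) zero_le_one
    fun z hz => ?_
  have hz0 : z ≠ 0 := ne_zero_of_mem_unit_sphere ⟨z, by simpa using hz⟩
  have hinv : HasDerivAt (fun w : ℂ => w⁻¹) (-(z ^ 2)⁻¹) z := hasDerivAt_inv hz0
  have hexp := ((hasDerivAt_id z).add hinv).const_mul s |>.cexp
  convert (((f.hasDerivAt z).mul ((g.hasDerivAt z⁻¹).comp z hinv)).mul hexp).hasDerivWithinAt
    using 1
  · rfl
  simp only [eval_mul, eval_add, eval_X, eval_C, Function.comp_apply, Pi.mul_apply, Pi.add_apply,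
    id]
  field_simp
  ring

end Polynomial

theorem stmt_11_general (s : ℝ) (hs : 0 < s)
    (p : ℕ → Polynomial ℂ)
    (hmonic : ∀ n, (p n).Monic)
    (hdeg : ∀ n, (p n).natDegree = n)
    (horth : ∀ n m, n ≠ m →
      (∮ z in C(0, 1), (p n).eval z * (p m).eval z⁻¹ *
        Complex.exp (s * (z + z⁻¹)) / z) = 0)
    (h : ℕ → ℂ)
    (hh : ∀ n, h n = ∮ z in C(0, 1), (p n).eval z * (p n).eval z⁻¹ *
        Complex.exp (s * (z + z⁻¹)) / z)
    (hne : ∀ n, h n ≠ 0)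
    (Bn Cn : ℕ → ℂ)
    (hrec : ∀ n, 1 ≤ n →
      Polynomial.X * (p n + Polynomial.C (Cn n) * p (n - 1)) =
        p (n + 1) + Polynomial.C (Bn n) * p n)
    (n : ℕ) (hn : 2 ≤ n) :
    (1 / (s : ℂ)) * (p n).coeff (n - 1) =
      -(Cn n) * (Bn (n - 1) - Cn (n - 1)) - h n / h (n - 1) := by
  obtain ⟨k, rfl⟩ : ∃ k, n = k + 2 := ⟨n - 2, by omega⟩
  have hp : (circlePairing s).IsMonicOrthogonalFamily p := ⟨hmonic, hdeg, horth⟩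
  have hnorm (j : ℕ) : circlePairing s (p j) (p j) = h j := (hh j).symm
  have hderiv : circlePairing s (p (k + 2)) (X * derivative (p (k + 1))) = 0 := by
    rw [← LinearMap.BilinForm.flip_apply]
    refine hp.flip.apply_eq_zero_of_degree_lt ((degree_X_mul_derivative_le _).trans_lt ?_)
    rw [degree_eq_natDegree (hmonic _).ne_zero, hdeg]
    exact_mod_cast Nat.lt_succ_self _
  have hshift : circlePairing s (p (k + 2)) (X * p (k + 1)) = h (k + 2) := by
    rw [← LinearMap.BilinForm.flip_apply, hp.flip.X_mul_apply_succ,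
      LinearMap.BilinForm.flip_apply, hnorm]
  have key := circlePairing_X_mul_derivative_add_C_mul s (p (k + 2)) (p (k + 1))
  simp only [mul_add, ← smul_eq_C_mul, mul_smul_comm, map_add, map_smul, LinearMap.add_apply,
    LinearMap.smul_apply, smul_eq_mul] at key
  rw [hp.X_mul_derivative_succ_apply, hp.X_mul_succ_apply hrec (by omega), hderiv, hshift,
    hnorm] at key
  have hs0 : (s : ℂ) ≠ 0 := Complex.ofReal_ne_zero.2 hs.ne'
  rw [show k + 2 - 1 = k + 1 by omega]
  field_simp [hne]
  linear_combination -key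

/-- Lemma 5 (ii): `(1/s)·b_{n−1} = −C_n·(B_{n−1} − C_{n−1}) − h_n/h_{n−1}` for `n ≥ 2`. -/
theorem stmt_11 (s : ℝ) (hs : 0 < s)
    (p : ℕ → Polynomial ℂ)
    (hmonic : ∀ n, (p n).Monic)
    (hdeg : ∀ n, (p n).natDegree = n)
    (hreal : ∀ n k, ((p n).coeff k).im = 0)
    (hp0 : ∀ n, (p n).coeff 0 ≠ 0)
    (horth : ∀ n m, n ≠ m →
      (∮ z in C(0, 1), (p n).eval z * (p m).eval z⁻¹ *
        Complex.exp (s * (z + z⁻¹)) / z) = 0)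
    (h : ℕ → ℂ)
    (hh : ∀ n, h n = ∮ z in C(0, 1), (p n).eval z * (p n).eval z⁻¹ *
        Complex.exp (s * (z + z⁻¹)) / z)
    (hne : ∀ n, h n ≠ 0)
    (Bn Cn : ℕ → ℂ)
    (hB : ∀ n, Bn n = -((p (n + 1)).coeff 0 / (p n).coeff 0))
    (hC : ∀ n, 1 ≤ n → Cn n = Bn n * h n / h (n - 1))
    (hrec : ∀ n, 1 ≤ n →
      Polynomial.X * (p n + Polynomial.C (Cn n) * p (n - 1)) =
        p (n + 1) + Polynomial.C (Bn n) * p n)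
    (n : ℕ) (hn : 2 ≤ n) :
    (1 / (s : ℂ)) * (p n).coeff (n - 1) =
      -(Cn n) * (Bn (n - 1) - Cn (n - 1)) - h n / h (n - 1) :=
  stmt_11_general s hs p hmonic hdeg horth h hh hne Bn Cn hrec n hn
end

section
/- With the s-dependent orthogonal family setup, define κ_n(s)² := 2πi/h_n(s), B_n(s) := −p_{n+1}(0,s)/p_n(0,s) and, for n ≥ 1, C_n(s) := B_n(s)·h_n(s)/h_{n−1}(s), and assume the recursion z·(p_n(z,s) + C_n(s) p_{n−1}(z,s)) = p_{n+1}(z,s) + B_n(s) p_n(z,s) holds for all n ≥ 1 and s > 0. Then for every n ≥ 1 and s > 0: B_n(s) − C_n(s) = −(d/ds κ_n(s)²)/(2 κ_n(s)²). -/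
open Polynomial Metric Complex Filter Topology Finset

/-! Write `⟪f, g⟫ₛ = expPairing s f g = ∮ f(z) g(1/z) e^{s(z + 1/z)} dz/z`, so that
`h_n(s) = ⟪p_n, p_n⟫ₛ`. Since `p_n(·, t) - p_n(·, s)` has degree `< n`, orthogonality gives
`h_n(t) = ⟪p_n(·, s), p_n(·, t)⟫ₜ`. Differentiating at `t = s`, the term coming from the
coefficients of `p_n(·, t)` pairs `p_n` with a polynomial of degree `< n` (the leading coefficient
is constantly `1`) and vanishes, while the weight contributes the factor `z + 1/z`; hence
`h_n' = ⟪z p_n, p_n⟫ + ⟪p_n, z p_n⟫`. The recurrence gives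
`z p_n = p_{n+1} + B_n p_n - C_n z p_{n-1}` with `z p_{n-1} ≡ p_n` modulo degree `< n`, so both
terms equal `(B_n - C_n) h_n`. Therefore `h_n'/h_n = 2 (B_n - C_n)`, and
`-(κ_n²)'/κ_n² = h_n'/h_n`. -/

theorem Polynomial.Monic.sub_mem_degreeLT {R : Type*} [CommRing R] [Nontrivial R] {p q : R[X]}
    (hp : p.Monic) (hq : q.Monic) {n : ℕ} (hpn : p.natDegree = n) (hqn : q.natDegree = n) :
    p - q ∈ degreeLT R n := by
  rw [mem_degreeLT, ← hpn, ← degree_eq_natDegree hp.ne_zero]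
  exact degree_sub_lt_left (by rw [degree_eq_natDegree hp.ne_zero,
    degree_eq_natDegree hq.ne_zero, hpn, hqn]) hp.ne_zero (by rw [hp.leadingCoeff, hq.leadingCoeff])

theorem LinearMap.apply_eq_sum_coeff_smul {R M : Type*} [CommSemiring R] [AddCommMonoid M]
    [Module R M] (L : R[X] →ₗ[R] M) {p : R[X]} {N : ℕ} (hp : p.natDegree < N) :
    L p = ∑ k ∈ Finset.range N, p.coeff k • L (X ^ k) := by
  conv_lhs => rw [p.as_sum_range_C_mul_X_pow' hp]
  simp only [map_sum, C_mul', map_smul]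

section OrthogonalSequence

variable {R M : Type*} [CommRing R] [Nontrivial R] [AddCommGroup M] [Module R M]
  (β : R[X] →ₗ[R] R[X] →ₗ[R] M) {S : ℕ → R[X]}

theorem LinearMap.apply_eq_zero_of_mem_degreeLT (hmonic : ∀ i, (S i).Monic)
    (hdeg : ∀ i, (S i).natDegree = i) (horth : ∀ i j, i ≠ j → β (S i) (S j) = 0)
    {n : ℕ} {q : R[X]} (hq : q ∈ degreeLT R n) : β q (S n) = 0 := by
  let T : Sequence R := ⟨S, fun i => by rw [degree_eq_natDegree (hmonic i).ne_zero, hdeg]⟩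
  rw [← T.span_degreeLT fun i _ => by simp [T, (hmonic i).leadingCoeff]] at hq
  suffices Submodule.span R (S '' Set.Iio n) ≤ LinearMap.ker (β.flip (S n)) from this hq
  rw [Submodule.span_le, Set.image_subset_iff]
  exact fun i hi => horth i n (Set.mem_Iio.mp hi).ne

theorem LinearMap.apply_X_mul_eq_of_recurrence (hmonic : ∀ i, (S i).Monic)
    (hdeg : ∀ i, (S i).natDegree = i) (horth : ∀ i j, i ≠ j → β (S i) (S j) = 0)
    {n : ℕ} {b c : R} (hrec : X * (S (n + 1) + C c * S n) = S (n + 2) + C b * S (n + 1)) :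
    β (X * S (n + 1)) (S (n + 1)) = (b - c) • β (S (n + 1)) (S (n + 1)) := by
  have hXS : X * S n - S (n + 1) ∈ degreeLT R (n + 1) :=
    (monic_X.mul (hmonic n)).sub_mem_degreeLT (hmonic _)
      (by rw [natDegree_X_mul (hmonic n).ne_zero, hdeg]) (hdeg _)
  have hshift : β (X * S n) (S (n + 1)) = β (S (n + 1)) (S (n + 1)) := by
    rw [← sub_eq_zero, ← LinearMap.sub_apply, ← map_sub]
    exact β.apply_eq_zero_of_mem_degreeLT hmonic hdeg horth hXS
  have hsplit : X * S (n + 1) = S (n + 2) + b • S (n + 1) - c • (X * S n) := by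
    rw [← C_mul', ← C_mul', ← hrec]; ring
  rw [hsplit, map_sub, map_add, map_smul, map_smul, LinearMap.sub_apply, LinearMap.add_apply,
    LinearMap.smul_apply, LinearMap.smul_apply, hshift, horth _ _ (by omega), sub_smul]
  abel

end OrthogonalSequence

theorem hasDerivAt_intervalIntegral_mul_exp {Φ Ψ : ℝ → ℂ} (hΦ : Continuous Φ)
    (hΨ : Continuous Ψ) (a b s : ℝ) :
    HasDerivAt (fun t : ℝ => ∫ θ in a..b, Φ θ * exp (t * Ψ θ))
      (∫ θ in a..b, Φ θ * Ψ θ * exp (s * Ψ θ)) s := by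
  refine (intervalIntegral.hasDerivAt_integral_of_dominated_loc_of_deriv_le
    (F := fun (t : ℝ) θ => Φ θ * exp (t * Ψ θ))
    (F' := fun (t : ℝ) θ => Φ θ * Ψ θ * exp (t * Ψ θ))
    (bound := fun θ => ‖Φ θ‖ * ‖Ψ θ‖ * Real.exp ((|s| + 1) * ‖Ψ θ‖))
    (ball_mem_nhds s one_pos) ?_ ?_ ?_ ?_ ?_ ?_).2
  · exact .of_forall fun t => by fun_prop
  · exact (by fun_prop : Continuous _).intervalIntegrable _ _
  · exact (by fun_prop : Continuous _).aestronglyMeasurable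
  · refine .of_forall fun θ _ t ht => ?_
    rw [norm_mul, norm_mul, norm_exp]
    gcongr
    calc (t * Ψ θ).re ≤ ‖(t : ℂ) * Ψ θ‖ := re_le_norm _
      _ ≤ (|s| + 1) * ‖Ψ θ‖ := by
        rw [norm_mul, norm_real, Real.norm_eq_abs]
        gcongr
        have := mem_ball_iff_norm.mp ht
        rw [Real.norm_eq_abs] at this
        linarith [abs_sub_abs_le_abs_sub t s]
  · exact (by fun_prop : Continuous _).intervalIntegrable _ _
  · refine .of_forall fun θ _ t _ => ?_
    have := ((hasDerivAt_id (t : ℂ)).mul_const (Ψ θ)).cexp.comp_ofReal.const_mul (Φ θ)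
    simpa [mul_comm, mul_assoc, mul_left_comm] using this

theorem hasDerivAt_circleIntegral_mul_exp {φ ψ : ℂ → ℂ} {c : ℂ} {R : ℝ}
    (hφ : ContinuousOn φ (sphere c |R|)) (hψ : ContinuousOn ψ (sphere c |R|)) (s : ℝ) :
    HasDerivAt (fun t : ℝ => ∮ z in C(c, R), φ z * exp (t * ψ z))
      (∮ z in C(c, R), φ z * ψ z * exp (s * ψ z)) s := by
  have hcirc {f : ℂ → ℂ} (hf : ContinuousOn f (sphere c |R|)) :
      Continuous fun θ => f (circleMap c R θ) :=
    hf.comp_continuous (continuous_circleMap c R) (circleMap_mem_sphere' c R)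
  simp only [circleIntegral, deriv_circleMap, smul_eq_mul, ← mul_assoc]
  exact hasDerivAt_intervalIntegral_mul_exp
    (((continuous_circleMap 0 R).mul continuous_const).mul (hcirc hφ)) (hcirc hψ) _ _ s

theorem continuousOn_inv_sphere : ContinuousOn (fun z : ℂ => z⁻¹) (sphere 0 1) :=
  continuousOn_inv₀.mono fun z hz => ne_zero_of_mem_sphere one_ne_zero ⟨z, hz⟩

theorem continuousOn_exp_mul_add_inv (s : ℂ) :
    ContinuousOn (fun z : ℂ => exp (s * (z + z⁻¹))) (sphere 0 1) :=
  continuous_exp.comp_continuousOn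
    (continuousOn_const.mul (continuousOn_id.add continuousOn_inv_sphere))

theorem continuousOn_eval_mul_eval_inv_div (f g : ℂ[X]) {w : ℂ → ℂ}
    (hw : ContinuousOn w (sphere 0 1)) :
    ContinuousOn (fun z => f.eval z * g.eval z⁻¹ * w z / z) (sphere 0 1) :=
  ((f.continuous.continuousOn.mul (g.continuous.comp_continuousOn continuousOn_inv_sphere)).mul
    hw).div continuousOn_id fun z hz => ne_zero_of_mem_sphere one_ne_zero ⟨z, hz⟩

theorem circleIntegrable_expPairing (s : ℂ) (f g : ℂ[X]) :
    CircleIntegrable (fun z => f.eval z * g.eval z⁻¹ * exp (s * (z + z⁻¹)) / z) 0 1 :=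
  (continuousOn_eval_mul_eval_inv_div f g (continuousOn_exp_mul_add_inv s)).circleIntegrable
    zero_le_one

noncomputable def expPairing (s : ℝ) : ℂ[X] →ₗ[ℂ] ℂ[X] →ₗ[ℂ] ℂ :=
  LinearMap.mk₂ ℂ
    (fun f g => ∮ z in C(0, 1), f.eval z * g.eval z⁻¹ * exp (s * (z + z⁻¹)) / z)
    (fun f₁ f₂ g => by
      rw [← circleIntegral.integral_add (circleIntegrable_expPairing _ _ _)
        (circleIntegrable_expPairing _ _ _)]
      congr 1; funext z; rw [eval_add]; ring)
    (fun a f g => by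
      rw [smul_eq_mul, ← circleIntegral.integral_const_mul]
      congr 1; funext z; rw [eval_smul, smul_eq_mul]; ring)
    (fun f g₁ g₂ => by
      rw [← circleIntegral.integral_add (circleIntegrable_expPairing _ _ _)
        (circleIntegrable_expPairing _ _ _)]
      congr 1; funext z; rw [eval_add]; ring)
    (fun a f g => by
      rw [smul_eq_mul, ← circleIntegral.integral_const_mul]
      congr 1; funext z; rw [eval_smul, smul_eq_mul]; ring)

theorem expPairing_apply (s : ℝ) (f g : ℂ[X]) :
    expPairing s f g = ∮ z in C(0, 1), f.eval z * g.eval z⁻¹ * exp (s * (z + z⁻¹)) / z := rfl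

theorem hasDerivAt_expPairing (f g : ℂ[X]) (s : ℝ) :
    HasDerivAt (fun t => expPairing t f g) (expPairing s (X * f) g + expPairing s f (X * g)) s := by
  have hψ : ContinuousOn (fun z : ℂ => z + z⁻¹) (sphere 0 |1|) := by
    rw [abs_one]; exact continuousOn_id.add continuousOn_inv_sphere
  have hφ : ContinuousOn (fun z => f.eval z * g.eval z⁻¹ / z) (sphere 0 |1|) := by
    rw [abs_one]
    simpa using continuousOn_eval_mul_eval_inv_div f g (w := 1) continuousOn_const
  convert hasDerivAt_circleIntegral_mul_exp hφ hψ s using 1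
  · funext t; rw [expPairing_apply]; congr 1; funext z; ring
  · rw [expPairing_apply, expPairing_apply, ← circleIntegral.integral_add
      (circleIntegrable_expPairing _ _ _) (circleIntegrable_expPairing _ _ _)]
    congr 1; funext z; simp only [eval_mul, eval_X]; ring

theorem hasDerivAt_expPairing_right (f : ℂ[X]) {q : ℝ → ℂ[X]} {N : ℕ} {s : ℝ}
    (hdeg : ∀ᶠ t in 𝓝 s, (q t).natDegree < N)
    (hdiff : ∀ k < N, DifferentiableAt ℝ (fun t => (q t).coeff k) s) :
    HasDerivAt (fun t => expPairing t f (q t))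
      (expPairing s f (∑ k ∈ range N, C (deriv (fun t => (q t).coeff k) s) * X ^ k)
        + expPairing s (X * f) (q s) + expPairing s f (X * q s)) s := by
  have hsum := HasDerivAt.fun_sum (u := range N) fun k hk =>
    (hdiff k (mem_range.1 hk)).hasDerivAt.mul (hasDerivAt_expPairing f (X ^ k) s)
  refine (hsum.congr_of_eventuallyEq (hdeg.mono fun t ht =>
    (expPairing t f).apply_eq_sum_coeff_smul ht)).congr_deriv ?_
  have hs := hdeg.self_of_nhds
  rw [(expPairing s (X * f)).apply_eq_sum_coeff_smul hs,
    show expPairing s f (X * q s) = (expPairing s f ∘ₗ LinearMap.mulLeft ℂ X) (q s) from rfl,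
    LinearMap.apply_eq_sum_coeff_smul _ hs]
  simp only [map_sum, C_mul', map_smul, smul_eq_mul, LinearMap.comp_apply,
    LinearMap.mulLeft_apply, ← sum_add_distrib, mul_add, add_assoc]

theorem hasDerivAt_expPairing_self {p : ℕ → ℝ → ℂ[X]}
    (hmonic : ∀ n s, 0 < s → (p n s).Monic) (hdeg : ∀ n s, 0 < s → (p n s).natDegree = n)
    (horth : ∀ s, 0 < s → ∀ n m, n ≠ m → expPairing s (p n s) (p m s) = 0)
    {n : ℕ} {s : ℝ} (hs : 0 < s)
    (hdiff : ∀ k ≤ n, DifferentiableAt ℝ (fun t => (p n t).coeff k) s) :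
    HasDerivAt (fun t => expPairing t (p n t) (p n t))
      (expPairing s (X * p n s) (p n s) + expPairing s (p n s) (X * p n s)) s := by
  have hpos : ∀ᶠ t in 𝓝 s, 0 < t := eventually_gt_nhds hs
  have hfreeze : (fun t => expPairing t (p n t) (p n t)) =ᶠ[𝓝 s]
      fun t => expPairing t (p n s) (p n t) := by
    filter_upwards [hpos] with t ht
    rw [← sub_eq_zero, ← LinearMap.sub_apply, ← map_sub]
    exact (expPairing t).apply_eq_zero_of_mem_degreeLT (hmonic · t ht) (hdeg · t ht) (horth t ht)
      ((hmonic n t ht).sub_mem_degreeLT (hmonic n s hs) (hdeg n t ht) (hdeg n s hs))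
  have hlead : (fun t => (p n t).coeff n) =ᶠ[𝓝 s] fun _ => 1 :=
    hpos.mono fun t ht => by simpa [hdeg n t ht] using (hmonic n t ht).coeff_natDegree
  have hD : ∑ k ∈ range (n + 1), C (deriv (fun t => (p n t).coeff k) s) * X ^ k
      ∈ degreeLT ℂ n := by
    rw [sum_range_succ, hlead.deriv_eq, deriv_const, C_0, zero_mul, add_zero]
    exact Submodule.sum_mem _ fun k hk => mem_degreeLT.2
      ((degree_C_mul_X_pow_le _ _).trans_lt (by exact_mod_cast mem_range.1 hk))
  have hD0 := (expPairing s).flip.apply_eq_zero_of_mem_degreeLT (hmonic · s hs) (hdeg · s hs)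
    (fun i j hij => horth s hs j i hij.symm) hD
  rw [LinearMap.flip_apply] at hD0
  have := hasDerivAt_expPairing_right (p n s) (q := fun t => p n t) (N := n + 1)
    (hpos.mono fun t ht => by rw [hdeg n t ht]; omega) (fun k hk => hdiff k (by omega))
  rw [hD0, zero_add] at this
  exact this.congr_of_eventuallyEq hfreeze

theorem stmt_13_general
    (p : ℕ → ℝ → Polynomial ℂ)
    (hmonic : ∀ n s, 0 < s → (p n s).Monic)
    (hdeg : ∀ n s, 0 < s → (p n s).natDegree = n)
    (horth : ∀ (n m : ℕ) (s : ℝ), 0 < s → n ≠ m →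
      (∮ z in C(0, 1), (p n s).eval z * (p m s).eval z⁻¹ *
        Complex.exp (s * (z + z⁻¹)) / z) = 0)
    (h : ℕ → ℝ → ℂ)
    (hh : ∀ (n : ℕ) (s : ℝ), 0 < s → h n s =
      ∮ z in C(0, 1), (p n s).eval z * (p n s).eval z⁻¹ *
        Complex.exp (s * (z + z⁻¹)) / z)
    (hne : ∀ (n : ℕ) (s : ℝ), 0 < s → h n s ≠ 0)
    (hcoeffdiff : ∀ (n k : ℕ), k ≤ n →
      DifferentiableOn ℝ (fun s => (p n s).coeff k) (Set.Ioi (0 : ℝ)))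
    (κsq : ℕ → ℝ → ℂ)
    (hκ : ∀ (n : ℕ) (s : ℝ), κsq n s = 2 * Real.pi * Complex.I / h n s)
    (Bn Cn : ℕ → ℝ → ℂ)
    (hrec : ∀ (n : ℕ) (s : ℝ), 1 ≤ n → 0 < s →
      Polynomial.X * (p n s + Polynomial.C (Cn n s) * p (n - 1) s) =
        p (n + 1) s + Polynomial.C (Bn n s) * p n s)
    (n : ℕ) (s : ℝ) (hn : 1 ≤ n) (hs : 0 < s) :
    Bn n s - Cn n s = -(deriv (κsq n) s) / (2 * κsq n s) := by
  obtain ⟨m, rfl⟩ : ∃ m, n = m + 1 := ⟨n - 1, by omega⟩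
  have horth_pairing : ∀ t, 0 < t → ∀ i j, i ≠ j → expPairing t (p i t) (p j t) = 0 :=
    fun t ht i j => horth i j t ht
  have hrecs := hrec (m + 1) s hn hs
  have hleft := (expPairing s).apply_X_mul_eq_of_recurrence (hmonic · s hs) (hdeg · s hs)
    (horth_pairing s hs) hrecs
  have hright := (expPairing s).flip.apply_X_mul_eq_of_recurrence (hmonic · s hs) (hdeg · s hs)
    (fun i j hij => horth_pairing s hs j i hij.symm) hrecs
  rw [LinearMap.flip_apply, LinearMap.flip_apply] at hright
  have hderiv : HasDerivAt (h (m + 1)) (2 * (Bn (m + 1) s - Cn (m + 1) s) * h (m + 1) s) s := by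
    refine ((hasDerivAt_expPairing_self hmonic hdeg horth_pairing hs fun k hk =>
      (hcoeffdiff _ k hk).differentiableAt (Ioi_mem_nhds hs)).congr_of_eventuallyEq
      ((eventually_gt_nhds hs).mono fun t ht => hh _ t ht)).congr_deriv ?_
    have hnorm : expPairing s (p (m + 1) s) (p (m + 1) s) = h (m + 1) s := (hh _ s hs).symm
    rw [hleft, hright, hnorm, smul_eq_mul]
    ring
  have hne' := hne (m + 1) s hs
  have hκderiv := (hasDerivAt_const s (2 * Real.pi * Complex.I : ℂ)).fun_div hderiv hne'
  rw [show κsq (m + 1) = _ from funext (hκ (m + 1)), hκderiv.deriv]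
  field_simp
  ring

/-- Lemma 6 (i): `B_n − C_n = −(κ_n²)′/(2κ_n²)` where `κ_n(s)² = 2πi/h_n(s)`. -/
theorem stmt_13
    (p : ℕ → ℝ → Polynomial ℂ)
    (hmonic : ∀ n s, 0 < s → (p n s).Monic)
    (hdeg : ∀ n s, 0 < s → (p n s).natDegree = n)
    (hreal : ∀ n s, 0 < s → ∀ k, ((p n s).coeff k).im = 0)
    (hp0 : ∀ n s, 0 < s → (p n s).coeff 0 ≠ 0)
    (horth : ∀ (n m : ℕ) (s : ℝ), 0 < s → n ≠ m →
      (∮ z in C(0, 1), (p n s).eval z * (p m s).eval z⁻¹ *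
        Complex.exp (s * (z + z⁻¹)) / z) = 0)
    (h : ℕ → ℝ → ℂ)
    (hh : ∀ (n : ℕ) (s : ℝ), 0 < s → h n s =
      ∮ z in C(0, 1), (p n s).eval z * (p n s).eval z⁻¹ *
        Complex.exp (s * (z + z⁻¹)) / z)
    (hne : ∀ (n : ℕ) (s : ℝ), 0 < s → h n s ≠ 0)
    (hcoeffdiff : ∀ (n k : ℕ), k ≤ n →
      DifferentiableOn ℝ (fun s => (p n s).coeff k) (Set.Ioi (0 : ℝ)))
    (κsq : ℕ → ℝ → ℂ)
    (hκ : ∀ (n : ℕ) (s : ℝ), κsq n s = 2 * Real.pi * Complex.I / h n s)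
    (Bn Cn : ℕ → ℝ → ℂ)
    (hB : ∀ (n : ℕ) (s : ℝ), 0 < s → Bn n s = -((p (n + 1) s).coeff 0 / (p n s).coeff 0))
    (hC : ∀ (n : ℕ) (s : ℝ), 1 ≤ n → 0 < s → Cn n s = Bn n s * h n s / h (n - 1) s)
    (hrec : ∀ (n : ℕ) (s : ℝ), 1 ≤ n → 0 < s →
      Polynomial.X * (p n s + Polynomial.C (Cn n s) * p (n - 1) s) =
        p (n + 1) s + Polynomial.C (Bn n s) * p n s)
    (n : ℕ) (s : ℝ) (hn : 1 ≤ n) (hs : 0 < s) :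
    Bn n s - Cn n s = -(deriv (κsq n) s) / (2 * κsq n s) :=
  stmt_13_general p hmonic hdeg horth h hh hne hcoeffdiff κsq hκ Bn Cn hrec n s hn hs
end
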